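/- arXiv:2311.06848 — 3 statements merged into one kernel-verified Lean document; each statement's English description precedes it below -/
import Mathlib

section
/- Let f : ℝ^n → ℝ be continuously differentiable, attain its minimum value f* at some point, and satisfy the Polyak–Łojasiewicz (PL) inequality with parameter μ > 0: (1/2)‖∇f(z)‖₂² ≥ μ(f(z) − f*) for all z ∈ ℝ^n. Suppose x : [0,∞) → ℝ^n is differentiable and x′(t) = −e^{‖∇f(x(t))‖₂}·∇f(x(t))/‖∇f(x(t))‖₂ for all t ≥ 0 (the right-hand side interpreted as 0 when ∇f(x(t)) = 0). Then for every T ≥ 0, the static regret satisfies ∫₀^T (f(x(t)) − f*) dt ≤ 1/μ²; in particular the regret is bounded by a constant independent of the initial state x(0). (Theorem 6, regret bound for the exponential flow g_e.) -/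
/-!
Along the flow the optimality gap `h = f ∘ x - f*` satisfies `h' = -g e^g` with `g = ‖∇f(x)‖`,
and PL gives `g ≥ √(2μh)`. The potential `Φ(u) = ∫₀ᵘ √(v/2μ) e^{-√(2μv)} dv` is chosen so that
`Φ'(h) · √(2μh) e^{√(2μh)} = h`; hence `(Φ ∘ h)' ≤ -h` and the regret up to `T` is at most
`Φ(h 0)`. Substituting `v = s²/(2μ)` gives `Φ(u) = (2 - (S² + 2S + 2) e^{-S}) / (2μ²)` with
`S = √(2μu)`, which is below `1/μ²`.
-/

open Real MeasureTheory intervalIntegral Set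

noncomputable def plWeight (μ v : ℝ) : ℝ :=
  √(v / (2 * μ)) * exp (-√(2 * μ * v))

noncomputable def plPotential (μ u : ℝ) : ℝ :=
  ∫ v in (0:ℝ)..u, plWeight μ v

lemma continuous_plWeight (μ : ℝ) : Continuous (plWeight μ) := by
  unfold plWeight; fun_prop

lemma plWeight_nonneg (μ v : ℝ) : 0 ≤ plWeight μ v := by
  unfold plWeight; positivity

lemma hasDerivAt_plPotential (μ u : ℝ) : HasDerivAt (plPotential μ) (plWeight μ u) u :=
  ((continuous_plWeight μ).integral_hasStrictDerivAt 0 u).hasDerivAt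

lemma continuous_plPotential (μ : ℝ) : Continuous (plPotential μ) :=
  continuous_iff_continuousAt.2 fun u => (hasDerivAt_plPotential μ u).continuousAt

lemma plPotential_nonneg (μ : ℝ) {u : ℝ} (hu : 0 ≤ u) : 0 ≤ plPotential μ u :=
  integral_nonneg hu fun v _ => plWeight_nonneg μ v

lemma integral_sq_mul_exp_neg (S : ℝ) :
    ∫ s in (0:ℝ)..S, s ^ 2 * exp (-s) = 2 - (S ^ 2 + 2 * S + 2) * exp (-S) := by
  have hderiv : ∀ s : ℝ, HasDerivAt (fun s => -(s ^ 2 + 2 * s + 2) * exp (-s))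
      (s ^ 2 * exp (-s)) s := fun s => by
    have := (((hasDerivAt_pow 2 s).add ((hasDerivAt_id s).const_mul 2)).add_const 2).neg.mul
      (hasDerivAt_neg s).exp
    exact this.congr_deriv (by simp only [Pi.add_apply, Pi.neg_apply, id_eq]; ring)
  rw [integral_eq_sub_of_hasDerivAt (fun s _ => hderiv s)
    ((by fun_prop : Continuous fun s : ℝ => s ^ 2 * exp (-s)).intervalIntegrable _ _)]
  rw [neg_zero, exp_zero]; ring

lemma plPotential_eq {μ u : ℝ} (hμ : 0 < μ) (hu : 0 ≤ u) :
    plPotential μ u =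
      (2 - (√(2 * μ * u) ^ 2 + 2 * √(2 * μ * u) + 2) * exp (-√(2 * μ * u))) / (2 * μ ^ 2) := by
  set S := √(2 * μ * u)
  have hS : 0 ≤ S := sqrt_nonneg _
  have hSsq : S ^ 2 = 2 * μ * u := sq_sqrt (by positivity)
  have hsubst : plPotential μ u =
      ∫ s in (0:ℝ)..S, (plWeight μ ∘ fun s => s ^ 2 / (2 * μ)) s * (s / μ) := by
    rw [integral_comp_mul_deriv (f := fun s => s ^ 2 / (2 * μ)) (fun s _ => ?_)
      (by fun_prop : Continuous fun s : ℝ => s / μ).continuousOn (continuous_plWeight μ)]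
    · simp [plPotential, hSsq, hμ.ne']
    · exact ((hasDerivAt_pow 2 s).div_const (2 * μ)).congr_deriv (by field_simp; ring)
  have hintegrand : EqOn (fun s => (plWeight μ ∘ fun s => s ^ 2 / (2 * μ)) s * (s / μ))
      (fun s => s ^ 2 * exp (-s) / (2 * μ ^ 2)) (uIcc 0 S) := fun s hs => by
    have hs : 0 ≤ s := by rw [uIcc_of_le hS] at hs; exact hs.1
    have h1 : 2 * μ * (s ^ 2 / (2 * μ)) = s ^ 2 := by field_simp
    have h2 : s ^ 2 / (2 * μ) / (2 * μ) = (s / (2 * μ)) ^ 2 := by ring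
    have hs' : 0 ≤ s / (2 * μ) := by positivity
    simp only [Function.comp, plWeight, h1, h2, sqrt_sq hs, sqrt_sq hs']
    field_simp
  rw [hsubst, integral_congr hintegrand, intervalIntegral.integral_div, integral_sq_mul_exp_neg]

lemma plPotential_le {μ : ℝ} (hμ : 0 < μ) (u : ℝ) : plPotential μ u ≤ 1 / μ ^ 2 := by
  rcases le_total u 0 with hu | hu
  · have : plPotential μ u ≤ 0 := by
      rw [plPotential, integral_symm, neg_nonpos]
      exact integral_nonneg hu fun v _ => plWeight_nonneg μ v
    exact this.trans (by positivity)
  · rw [plPotential_eq hμ hu, div_le_div_iff₀ (by positivity) (by positivity)]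
    have : 0 ≤ (√(2 * μ * u) ^ 2 + 2 * √(2 * μ * u) + 2) * exp (-√(2 * μ * u)) := by positivity
    nlinarith [sq_nonneg μ]

lemma plWeight_mul_sqrt_mul_exp {μ h : ℝ} (hμ : 0 < μ) (hh : 0 ≤ h) :
    plWeight μ h * (√(2 * μ * h) * exp √(2 * μ * h)) = h := by
  have hsqrt : √(h / (2 * μ)) * √(2 * μ * h) = h := by
    rw [← sqrt_mul (by positivity), show h / (2 * μ) * (2 * μ * h) = h ^ 2 by field_simp,
      sqrt_sq hh]
  calc plWeight μ h * (√(2 * μ * h) * exp √(2 * μ * h))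
      = (√(h / (2 * μ)) * √(2 * μ * h)) * (exp (-√(2 * μ * h)) * exp √(2 * μ * h)) := by
        unfold plWeight; ring
    _ = h := by rw [hsqrt, ← exp_add, neg_add_cancel, exp_zero, mul_one]

lemma le_plWeight_mul {μ h g : ℝ} (hμ : 0 < μ) (hh : 0 ≤ h) (hg : 0 ≤ g)
    (hPL : 2 * μ * h ≤ g ^ 2) : h ≤ plWeight μ h * (g * exp g) := by
  have hs : √(2 * μ * h) ≤ g := by simpa [sqrt_sq hg] using sqrt_le_sqrt hPL
  calc h = plWeight μ h * (√(2 * μ * h) * exp √(2 * μ * h)) :=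
        (plWeight_mul_sqrt_mul_exp hμ hh).symm
    _ ≤ plWeight μ h * (g * exp g) := by have := plWeight_nonneg μ h; gcongr

lemma integral_le_plPotential {μ T : ℝ} (hμ : 0 < μ) (hT : 0 ≤ T) {h g : ℝ → ℝ}
    (hh : ∀ t, 0 ≤ h t) (hg : ∀ t, 0 ≤ g t) (hPL : ∀ t, 2 * μ * h t ≤ g t ^ 2)
    (hderiv : ∀ t ≥ (0:ℝ), HasDerivAt h (-(g t * exp (g t))) t) :
    ∫ t in (0:ℝ)..T, h t ≤ plPotential μ (h 0) := by
  have hcont : ContinuousOn h (Icc 0 T) := fun t ht =>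
    (hderiv t ht.1).continuousAt.continuousWithinAt
  have hpotential : ∀ t ∈ Ioo 0 T, HasDerivWithinAt (fun t => -plPotential μ (h t))
      (plWeight μ (h t) * (g t * exp (g t))) (Ioi t) t := fun t ht => by
    have := ((hasDerivAt_plPotential μ (h t)).comp t (hderiv t ht.1.le)).neg
    exact (this.congr_deriv (by ring)).hasDerivWithinAt
  have := integral_le_sub_of_hasDeriv_right_of_le (g := fun t => -plPotential μ (h t)) hT
    ((continuous_plPotential μ).neg.comp_continuousOn hcont) hpotential hcont.integrableOn_Icc
    fun t _ => le_plWeight_mul hμ (hh t) (hg t) (hPL t)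
  linarith [plPotential_nonneg μ (hh T)]

lemma hasDerivAt_comp_expFlow {n : ℕ} {f : EuclideanSpace ℝ (Fin n) → ℝ}
    {x : ℝ → EuclideanSpace ℝ (Fin n)} {t : ℝ}
    (hf : DifferentiableAt ℝ f (x t))
    (hx : HasDerivAt x (-((exp ‖gradient f (x t)‖ / ‖gradient f (x t)‖) • gradient f (x t))) t) :
    HasDerivAt (fun t => f (x t)) (-(‖gradient f (x t)‖ * exp ‖gradient f (x t)‖)) t := by
  refine (hf.hasFDerivAt.comp_hasDerivAt t hx).congr_deriv ?_
  rw [← inner_gradient_left, inner_neg_right, inner_smul_right, real_inner_self_eq_norm_sq]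
  -- at a critical point the velocity is `(exp 0 / 0) • 0 = 0`, the paper's convention
  rcases eq_or_ne ‖gradient f (x t)‖ 0 with h0 | h0
  · simp [h0]
  · field_simp

theorem regret_bound_exp_flow_general
    {n : ℕ} (f : EuclideanSpace ℝ (Fin n) → ℝ) (fstar μ : ℝ)
    (hf : ContDiff ℝ 1 f)
    (hlb : ∀ z, fstar ≤ f z)
    (hμ : 0 < μ)
    (hPL : ∀ z, μ * (f z - fstar) ≤ (1/2) * ‖gradient f z‖ ^ 2)
    (x : ℝ → EuclideanSpace ℝ (Fin n))
    (hx : ∀ t ≥ (0:ℝ), HasDerivAt x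
      (-((Real.exp ‖gradient f (x t)‖ / ‖gradient f (x t)‖) • gradient f (x t))) t) :
    ∀ T ≥ (0:ℝ), ∫ t in (0:ℝ)..T, (f (x t) - fstar) ≤ 1 / μ ^ 2 := by
  intro T hT
  have hgap : ∀ t ≥ (0:ℝ), HasDerivAt (fun t => f (x t) - fstar)
      (-(‖gradient f (x t)‖ * exp ‖gradient f (x t)‖)) t := fun t ht =>
    (hasDerivAt_comp_expFlow (hf.differentiable one_ne_zero _) (hx t ht)).sub_const fstar
  calc ∫ t in (0:ℝ)..T, (f (x t) - fstar)
      ≤ plPotential μ (f (x 0) - fstar) :=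
        integral_le_plPotential hμ hT (fun t => sub_nonneg.2 (hlb _)) (fun _ => norm_nonneg _)
          (fun t => by linarith [hPL (x t)]) hgap
    _ ≤ 1 / μ ^ 2 := plPotential_le hμ _

/-- Theorem 6 (regret bound for the exponential flow g_e): the static regret is
bounded by 1/μ², independently of the initial state. -/
theorem regret_bound_exp_flow
    {n : ℕ} (f : EuclideanSpace ℝ (Fin n) → ℝ) (fstar μ : ℝ)
    (hf : ContDiff ℝ 1 f)
    (hmin : ∃ z, f z = fstar) (hlb : ∀ z, fstar ≤ f z)
    (hμ : 0 < μ)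
    (hPL : ∀ z, μ * (f z - fstar) ≤ (1/2) * ‖gradient f z‖ ^ 2)
    (x : ℝ → EuclideanSpace ℝ (Fin n))
    (hx : ∀ t ≥ (0:ℝ), HasDerivAt x
      (-((Real.exp ‖gradient f (x t)‖ / ‖gradient f (x t)‖) • gradient f (x t))) t) :
    ∀ T ≥ (0:ℝ), ∫ t in (0:ℝ)..T, (f (x t) - fstar) ≤ 1 / μ ^ 2 :=
  regret_bound_exp_flow_general f fstar μ hf hlb hμ hPL x hx
end

section
/- Let f : ℝ^n → ℝ be continuously differentiable, attain its minimum value f* at some point, and satisfy the Polyak–Łojasiewicz (PL) inequality with parameter μ > 0: (1/2)‖∇f(z)‖₂² ≥ μ(f(z) − f*) for all z ∈ ℝ^n. Let p ∈ [0,1) and q > 3; set α = (p+1)/2, β = (q+1)/2 (so β > 2), a = (2μ)^α, b = (2μ)^β. Suppose x : [0,∞) → ℝ^n is differentiable and x′(t) = −(‖∇f(x(t))‖₂^{p−1} + ‖∇f(x(t))‖₂^{q−1})·∇f(x(t)) for all t ≥ 0 (the right-hand side interpreted as 0 when ∇f(x(t)) = 0). Then for every T ≥ 0, the static regret satisfies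 ∫₀^T (f(x(t)) − f*) dt ≤ 1/(a(2−α)) + 1/(b(β−2)); in particular the regret is bounded by a constant independent of the initial state x(0). (Theorem 6, regret bound for the fixed-time flow g_{p,q} with β > 2.) -/
/-! Along the flow, `V t = f (x t) - f*` satisfies `V' = -(‖∇f‖ ^ (p + 1) + ‖∇f‖ ^ (q + 1))`, and
the PL inequality `2μV ≤ ‖∇f‖²` turns this into `V' ≤ -(a V ^ α + b V ^ β)`. Take the potential
`H` with `H 0 = 0` and `H' v = v ^ (1 - α) / a` on `[0, 1]`, `H' v = v ^ (1 - β) / b` on `[1, ∞)`.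
Then `H' v * (a v ^ α + b v ^ β) ≥ v`, so `(H ∘ V)' ≤ -V`, and the regret up to `T` is at most
`H (V 0) - H (V T) ≤ sup H = 1 / (a (2 - α)) + 1 / (b (β - 2))`, finite because `α < 2 < β`. -/

open Set

/-- Written with `min` and `max` so that continuity at the corner `v = 1` is automatic. -/
noncomputable def regretPotential (a b α β v : ℝ) : ℝ :=
  min v 1 ^ (2 - α) / (a * (2 - α)) + (1 - max v 1 ^ (2 - β)) / (b * (β - 2))

noncomputable def regretPotentialDeriv (a b α β v : ℝ) : ℝ :=
  if v ≤ 1 then v ^ (1 - α) / a else v ^ (1 - β) / b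

section RegretPotential

variable {a b α β : ℝ}

theorem continuous_regretPotential (hα : α < 2) : Continuous (regretPotential a b α β) := by
  unfold regretPotential
  refine Continuous.add ?_ ?_
  · exact ((continuous_id.min continuous_const).rpow_const
      fun _ => Or.inr (by linarith)).div_const _
  · refine (continuous_const.sub ?_).div_const _
    exact (continuous_id.max continuous_const).rpow_const
      fun v => Or.inl (by positivity)

theorem regretPotential_nonneg (ha : 0 ≤ a) (hb : 0 ≤ b) (hα : α < 2) (hβ : 2 < β) {v : ℝ}
    (hv : 0 ≤ v) : 0 ≤ regretPotential a b α β v := by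
  have h2α : 0 < 2 - α := by linarith
  have h2β : 0 < β - 2 := by linarith
  have hmax : max v 1 ^ (2 - β) ≤ 1 :=
    Real.rpow_le_one_of_one_le_of_nonpos (le_max_right _ _) (by linarith)
  unfold regretPotential
  have := Real.rpow_nonneg (le_min hv zero_le_one) (2 - α)
  have : 0 ≤ 1 - max v 1 ^ (2 - β) := by linarith
  positivity

theorem regretPotential_le (ha : 0 ≤ a) (hb : 0 ≤ b) (hα : α < 2) (hβ : 2 < β) {v : ℝ}
    (hv : 0 ≤ v) : regretPotential a b α β v ≤ 1 / (a * (2 - α)) + 1 / (b * (β - 2)) := by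
  have h2α : 0 < 2 - α := by linarith
  have h2β : 0 < β - 2 := by linarith
  have hmin : min v 1 ^ (2 - α) ≤ 1 :=
    Real.rpow_le_one (le_min hv zero_le_one) (min_le_right _ _) h2α.le
  have hmax : 0 ≤ max v 1 ^ (2 - β) := Real.rpow_nonneg (hv.trans (le_max_left _ _)) _
  unfold regretPotential
  gcongr
  linarith

theorem hasDerivWithinAt_regretPotential_Iic (hα : α ≤ 1) (hβ : β ≠ 2) (v : ℝ) :
    HasDerivWithinAt (regretPotential a b α β) (regretPotentialDeriv a b α β v) (Iic v) v := by
  have h2α : 2 - α ≠ 0 := by linarith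
  have h2β : β - 2 ≠ 0 := sub_ne_zero.2 hβ
  unfold regretPotentialDeriv
  split_ifs with hv
  · have hL : HasDerivAt (fun w => w ^ (2 - α) / (a * (2 - α)) + (1 - 1 ^ (2 - β)) / (b * (β - 2)))
        (v ^ (1 - α) / a) v := by
      have hpow := Real.hasDerivAt_rpow_const (x := v) (p := 2 - α) (Or.inr (by linarith))
      refine ((hpow.div_const (a * (2 - α))).add_const _).congr_deriv ?_
      rw [show 2 - α - 1 = 1 - α by ring]
      field_simp
    refine hL.hasDerivWithinAt.congr (fun w hw => ?_) ?_
    · simp [regretPotential, (mem_Iic.1 hw).trans hv]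
    · simp [regretPotential, hv]
  · replace hv := not_le.1 hv
    have hR : HasDerivAt (fun w => 1 ^ (2 - α) / (a * (2 - α)) + (1 - w ^ (2 - β)) / (b * (β - 2)))
        (v ^ (1 - β) / b) v := by
      have hpow := Real.hasDerivAt_rpow_const (x := v) (p := 2 - β) (Or.inl (by positivity))
      refine (((hpow.const_sub 1).div_const (b * (β - 2))).const_add _).congr_deriv ?_
      rw [show 2 - β - 1 = 1 - β by ring]
      field_simp
      ring
    refine (hR.congr_of_eventuallyEq ?_).hasDerivWithinAt
    filter_upwards [eventually_gt_nhds hv] with w hw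
    simp [regretPotential, hw.le]

theorem regretPotentialDeriv_nonneg (ha : 0 ≤ a) (hb : 0 ≤ b) {v : ℝ} (hv : 0 ≤ v) :
    0 ≤ regretPotentialDeriv a b α β v := by
  unfold regretPotentialDeriv
  split_ifs <;> positivity

theorem le_regretPotentialDeriv_mul (ha : 0 < a) (hb : 0 < b) {v : ℝ} (hv : 0 ≤ v) :
    v ≤ regretPotentialDeriv a b α β v * (a * v ^ α + b * v ^ β) := by
  have hpow : ∀ γ : ℝ, v ^ (1 - γ) * v ^ γ = v := fun γ => by
    rw [← Real.rpow_add' hv (by norm_num), sub_add_cancel, Real.rpow_one]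
  unfold regretPotentialDeriv
  split_ifs
  · calc v = v ^ (1 - α) / a * (a * v ^ α) := by field_simp; rw [hpow]
      _ ≤ v ^ (1 - α) / a * (a * v ^ α + b * v ^ β) := by
        gcongr
        exact le_add_of_nonneg_right (by positivity)
  · calc v = v ^ (1 - β) / b * (b * v ^ β) := by field_simp; rw [hpow]
      _ ≤ v ^ (1 - β) / b * (a * v ^ α + b * v ^ β) := by
        gcongr
        exact le_add_of_nonneg_left (by positivity)

end RegretPotential

section Comparison

variable {a b α β : ℝ} {V W : ℝ → ℝ}

theorem integral_le_sub_regretPotential (ha : 0 < a) (hb : 0 < b) (hα : α ≤ 1) (hβ : 2 < β)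
    (hV : ∀ t ≥ 0, 0 ≤ V t) (hVW : ∀ t ≥ 0, HasDerivAt V (W t) t)
    (hW : ∀ t ≥ 0, W t ≤ -(a * V t ^ α + b * V t ^ β)) {T : ℝ} (hT : 0 ≤ T) :
    ∫ t in 0..T, V t ≤ regretPotential a b α β (V 0) - regretPotential a b α β (V T) := by
  have hcont : ContinuousOn V (Ici 0) := fun t ht => (hVW t ht).continuousAt.continuousWithinAt
  have hanti : AntitoneOn V (Ici 0) := by
    refine antitoneOn_of_hasDerivWithinAt_nonpos (convex_Ici 0) hcont
      (fun t ht => (hVW t (interior_subset ht)).hasDerivWithinAt) fun t ht => ?_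
    have ht : t ∈ Ici 0 := interior_subset ht
    have := hW t ht
    have := hV t ht
    have : 0 ≤ a * V t ^ α + b * V t ^ β := by positivity
    linarith
  -- `H` has a corner at `1`; as `V` is antitone, only the derivative within `Iic (V t)` matters.
  have hderiv : ∀ t ∈ Ioo 0 T, HasDerivWithinAt (regretPotential a b α β ∘ V)
      (regretPotentialDeriv a b α β (V t) * W t) (Ioi t) t := fun t ht =>
    (hasDerivWithinAt_regretPotential_Iic hα hβ.ne' (V t)).comp t (hVW t ht.1.le).hasDerivWithinAt
      fun s hs => hanti (mem_Ici.2 ht.1.le) (mem_Ici.2 (ht.1.trans hs).le) (le_of_lt hs)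
  have hdecay : ∀ t ∈ Ioo 0 T, regretPotentialDeriv a b α β (V t) * W t ≤ -V t := by
    intro t ht
    have ht : 0 ≤ t := ht.1.le
    calc regretPotentialDeriv a b α β (V t) * W t
        ≤ regretPotentialDeriv a b α β (V t) * -(a * V t ^ α + b * V t ^ β) :=
          mul_le_mul_of_nonneg_left (hW t ht) (regretPotentialDeriv_nonneg ha.le hb.le (hV t ht))
      _ ≤ -V t := by
        rw [mul_neg, neg_le_neg_iff]
        exact le_regretPotentialDeriv_mul ha hb (hV t ht)
  have hcontIcc := hcont.mono (Icc_subset_Ici_self : Icc 0 T ⊆ Ici 0)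
  have := intervalIntegral.sub_le_integral_of_hasDeriv_right_of_le hT
    ((continuous_regretPotential (by linarith)).comp_continuousOn hcontIcc) hderiv
    hcontIcc.neg.integrableOn_Icc hdecay
  simp only [Function.comp_apply, Pi.neg_apply, intervalIntegral.integral_neg] at this
  linarith

theorem integral_le_of_hasDerivAt_le_neg_rpow_add_rpow (ha : 0 < a) (hb : 0 < b) (hα : α ≤ 1)
    (hβ : 2 < β) (hV : ∀ t ≥ 0, 0 ≤ V t) (hVW : ∀ t ≥ 0, HasDerivAt V (W t) t)
    (hW : ∀ t ≥ 0, W t ≤ -(a * V t ^ α + b * V t ^ β)) {T : ℝ} (hT : 0 ≤ T) :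
    ∫ t in 0..T, V t ≤ 1 / (a * (2 - α)) + 1 / (b * (β - 2)) := by
  have hα2 : α < 2 := by linarith
  have := integral_le_sub_regretPotential ha hb hα hβ hV hVW hW hT
  have := regretPotential_le (b := b) (β := β) ha.le hb.le hα2 hβ (hV 0 le_rfl)
  have := regretPotential_nonneg (b := b) (β := β) ha.le hb.le hα2 hβ (hV T hT)
  linarith

end Comparison

theorem DifferentiableAt.hasDerivAt_comp_neg_smul_gradient {E : Type*} [NormedAddCommGroup E]
    [InnerProductSpace ℝ E] [CompleteSpace E] {f : E → ℝ} {x : ℝ → E} {c t : ℝ}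
    (hf : DifferentiableAt ℝ f (x t))
    (hx : HasDerivAt x (-(c • gradient f (x t))) t) :
    HasDerivAt (fun s => f (x s)) (-(c * ‖gradient f (x t)‖ ^ 2)) t := by
  have := hf.hasFDerivAt.comp_hasDerivAt t hx
  rwa [← inner_gradient_left, inner_neg_right, real_inner_smul_right,
    real_inner_self_eq_norm_sq] at this

theorem Real.rpow_half_add_one_le_rpow_sub_one_mul_sq {s r e : ℝ} (hs : 0 ≤ s) (hr : 0 ≤ r)
    (hsr : s ≤ r ^ 2) (he : -1 < e) : s ^ ((e + 1) / 2) ≤ r ^ (e - 1) * r ^ 2 :=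
  calc s ^ ((e + 1) / 2) ≤ (r ^ 2) ^ ((e + 1) / 2) := Real.rpow_le_rpow hs hsr (by linarith)
    _ = r ^ (e + 1) := by
      rw [← Real.rpow_natCast, ← Real.rpow_mul hr]
      ring_nf
    _ = r ^ (e - 1) * r ^ 2 := by
      rw [← Real.rpow_natCast, ← Real.rpow_add' hr (by push_cast; linarith)]
      ring_nf

theorem regret_bound_gpq_flow_general
    {n : ℕ} (f : EuclideanSpace ℝ (Fin n) → ℝ) (fstar μ p q : ℝ)
    (hf : ContDiff ℝ 1 f)
    (hlb : ∀ z, fstar ≤ f z)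
    (hμ : 0 < μ)
    (hPL : ∀ z, μ * (f z - fstar) ≤ (1/2) * ‖gradient f z‖ ^ 2)
    (hp : p ∈ Set.Ico (0:ℝ) 1) (hq : 3 < q)
    (x : ℝ → EuclideanSpace ℝ (Fin n))
    (hx : ∀ t ≥ (0:ℝ), HasDerivAt x
      (-((‖gradient f (x t)‖ ^ (p - 1) + ‖gradient f (x t)‖ ^ (q - 1)) •
        gradient f (x t))) t) :
    ∀ T ≥ (0:ℝ),
      ∫ t in (0:ℝ)..T, (f (x t) - fstar) ≤
        1 / ((2 * μ) ^ ((p + 1)/2) * (2 - (p + 1)/2)) +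
          1 / ((2 * μ) ^ ((q + 1)/2) * ((q + 1)/2 - 2)) := by
  intro T hT
  have hμ2 : 0 < 2 * μ := by linarith
  have hV : ∀ t, 0 ≤ f (x t) - fstar := fun t => sub_nonneg.2 (hlb (x t))
  refine integral_le_of_hasDerivAt_le_neg_rpow_add_rpow (Real.rpow_pos_of_pos hμ2 _)
    (Real.rpow_pos_of_pos hμ2 _) (by linarith [hp.2]) (by linarith) (fun t _ => hV t)
    (fun t ht => ((hf.differentiable one_ne_zero _).hasDerivAt_comp_neg_smul_gradient
      (hx t ht)).sub_const fstar) (fun t _ => ?_) hT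
  set r := ‖gradient f (x t)‖
  have hPLt : 2 * μ * (f (x t) - fstar) ≤ r ^ 2 := by linarith [hPL (x t)]
  have hpr := Real.rpow_half_add_one_le_rpow_sub_one_mul_sq (e := p)
    (mul_nonneg hμ2.le (hV t)) (norm_nonneg _) hPLt (by linarith [hp.1])
  have hqr := Real.rpow_half_add_one_le_rpow_sub_one_mul_sq (e := q)
    (mul_nonneg hμ2.le (hV t)) (norm_nonneg _) hPLt (by linarith)
  rw [Real.mul_rpow hμ2.le (hV t)] at hpr hqr
  linarith

/-- Theorem 6 (regret bound for the fixed-time flow g_{p,q} with β > 2, i.e.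
q > 3): the static regret is bounded by a constant independent of the initial
state. -/
theorem regret_bound_gpq_flow
    {n : ℕ} (f : EuclideanSpace ℝ (Fin n) → ℝ) (fstar μ p q : ℝ)
    (hf : ContDiff ℝ 1 f)
    (hmin : ∃ z, f z = fstar) (hlb : ∀ z, fstar ≤ f z)
    (hμ : 0 < μ)
    (hPL : ∀ z, μ * (f z - fstar) ≤ (1/2) * ‖gradient f z‖ ^ 2)
    (hp : p ∈ Set.Ico (0:ℝ) 1) (hq : 3 < q)
    (x : ℝ → EuclideanSpace ℝ (Fin n))
    (hx : ∀ t ≥ (0:ℝ), HasDerivAt x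
      (-((‖gradient f (x t)‖ ^ (p - 1) + ‖gradient f (x t)‖ ^ (q - 1)) •
        gradient f (x t))) t) :
    ∀ T ≥ (0:ℝ),
      ∫ t in (0:ℝ)..T, (f (x t) - fstar) ≤
        1 / ((2 * μ) ^ ((p + 1)/2) * (2 - (p + 1)/2)) +
          1 / ((2 * μ) ^ ((q + 1)/2) * ((q + 1)/2 - 2)) :=
  regret_bound_gpq_flow_general f fstar μ p q hf hlb hμ hPL hp hq x hx
end

section
/- Let G be a connected simple graph on the vertex set {1,…,N} with Laplacian matrix L ∈ ℝ^{N×N}, and let λ > 0 be such that ‖Lz‖₂² ≥ λ·zᵀLz for all z ∈ ℝ^N (any λ not exceeding the algebraic connectivity λ₂(L) has this property). Let σ, ρ > 0, p ∈ [0,1), q > 1, and let g : ℝ^N → ℝ^N satisfy ⟨g(y), y⟩ ≥ σ‖y‖₂^{1+p} + ρ‖y‖₂^{1+q} for all y ∈ ℝ^N. If x : [0,∞) → ℝ^N is differentiable and x′(t) = −g(L·x(t)) for all t ≥ 0, then the network reaches consensus in fixed time: for all t ≥ T = 1/(λσ(1−p)) + 1/(λρ(q−1)) and all vertices i, j, x_i(t)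 = x_j(t). (Corollary 1.) -/
/-!
`U(t) = λ · x(t)ᵀ L x(t)` is a Lyapunov function. Along the flow `U' = -2λ ⟪g(Lx), Lx⟫`, and the
PL inequality `U ≤ ‖Lx‖²` turns the growth condition on `g` into
`U' ≤ -(a U^α + b U^β)` with `a = 2λσ`, `b = 2λρ`, `α = (1 + p)/2 < 1 < β = (1 + q)/2`.
Since `U^(1-β)` grows at rate at least `b(β - 1)`, `U` drops below `1` by time `1/(b(β - 1))`;
after that `U^(1-α)` decreases at rate at least `a(1 - α)` and reaches `0` within time
`1/(a(1 - α))`. Finally `xᵀ L x = 0` forces `x` to be constant on the connected graph.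
-/

open scoped RealInnerProductSpace
open Set

theorem rpow_div_two_le_pow_of_le_sq {u y r : ℝ} (hu : 0 ≤ u) (hy : 0 ≤ y) (hr : 0 ≤ r)
    (huy : u ≤ y ^ 2) : u ^ (r / 2) ≤ y ^ r :=
  calc u ^ (r / 2) ≤ (y ^ 2) ^ (r / 2) := Real.rpow_le_rpow hu huy (by positivity)
    _ = y ^ r := by
      rw [← Real.rpow_natCast, ← Real.rpow_mul hy]; norm_num [mul_div_cancel₀]

-- `U ^ (1 - γ) / (1 - γ)` has derivative `U ^ (-γ) * U' ≤ -c`, whatever the sign of `1 - γ`.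
theorem rpow_one_sub_div_add_mul_le_of_deriv_le_neg_rpow {U U' : ℝ → ℝ} {γ c a b : ℝ}
    (hγ : γ ≠ 1) (hab : a ≤ b) (hpos : ∀ t ∈ Icc a b, 0 < U t)
    (hU : ∀ t ∈ Icc a b, HasDerivAt U (U' t) t) (hU' : ∀ t ∈ Icc a b, U' t ≤ -c * U t ^ γ) :
    U b ^ (1 - γ) / (1 - γ) + c * (b - a) ≤ U a ^ (1 - γ) / (1 - γ) := by
  set φ : ℝ → ℝ := fun t ↦ U t ^ (1 - γ) / (1 - γ)
  have hφ : ∀ t ∈ Icc a b, HasDerivAt φ (U t ^ (-γ) * U' t) t := by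
    intro t ht
    have hsub : 1 - γ ≠ 0 := sub_ne_zero.mpr hγ.symm
    refine (((Real.hasDerivAt_rpow_const (Or.inl (hpos t ht).ne')).comp t (hU t ht)).div_const
      (1 - γ)).congr_deriv ?_
    rw [sub_sub_cancel_left]
    field_simp
  have hφ' : ∀ t ∈ Icc a b, U t ^ (-γ) * U' t ≤ -c := by
    intro t ht
    calc U t ^ (-γ) * U' t ≤ U t ^ (-γ) * (-c * U t ^ γ) :=
          mul_le_mul_of_nonneg_left (hU' t ht) (Real.rpow_nonneg (hpos t ht).le _)
      _ = -c := by
          rw [mul_left_comm, ← Real.rpow_add (hpos t ht), neg_add_cancel, Real.rpow_zero, mul_one]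
  have := (convex_Icc a b).image_sub_le_mul_sub_of_deriv_le
    (fun t ht ↦ (hφ t ht).continuousAt.continuousWithinAt)
    (fun t ht ↦ (hφ t (interior_subset ht)).differentiableAt.differentiableWithinAt)
    (fun t ht ↦ (hφ t (interior_subset ht)).deriv ▸ hφ' t (interior_subset ht))
    a (left_mem_Icc.mpr hab) b (right_mem_Icc.mpr hab) hab
  linarith

theorem rpow_one_sub_le_of_deriv_le_neg_rpow_of_lt_one {U U' : ℝ → ℝ} {γ c a b : ℝ}
    (hγ : γ < 1) (hab : a ≤ b) (hpos : ∀ t ∈ Icc a b, 0 < U t)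
    (hU : ∀ t ∈ Icc a b, HasDerivAt U (U' t) t) (hU' : ∀ t ∈ Icc a b, U' t ≤ -c * U t ^ γ) :
    U b ^ (1 - γ) ≤ U a ^ (1 - γ) - c * (1 - γ) * (b - a) := by
  have key := rpow_one_sub_div_add_mul_le_of_deriv_le_neg_rpow hγ.ne hab hpos hU hU'
  have hγ' : 0 < 1 - γ := sub_pos.mpr hγ
  rw [div_add' _ _ _ hγ'.ne', div_le_div_iff_of_pos_right hγ'] at key
  linarith

theorem rpow_one_sub_add_mul_le_of_deriv_le_neg_rpow_of_one_lt {U U' : ℝ → ℝ} {γ c a b : ℝ}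
    (hγ : 1 < γ) (hab : a ≤ b) (hpos : ∀ t ∈ Icc a b, 0 < U t)
    (hU : ∀ t ∈ Icc a b, HasDerivAt U (U' t) t) (hU' : ∀ t ∈ Icc a b, U' t ≤ -c * U t ^ γ) :
    U a ^ (1 - γ) + c * (γ - 1) * (b - a) ≤ U b ^ (1 - γ) := by
  have key := rpow_one_sub_div_add_mul_le_of_deriv_le_neg_rpow hγ.ne' hab hpos hU hU'
  have hγ' : 1 - γ < 0 := sub_neg.mpr hγ
  rw [div_add' _ _ _ hγ'.ne, div_le_div_right_of_neg hγ'] at key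
  linarith

theorem eq_zero_of_deriv_le_neg_rpow_add_rpow {U U' : ℝ → ℝ} {a b α β t : ℝ}
    (ha : 0 < a) (hb : 0 < b) (hα : α < 1) (hβ : 1 < β)
    (hU₀ : ∀ s ≥ 0, 0 ≤ U s) (hU : ∀ s ≥ 0, HasDerivAt U (U' s) s)
    (hU' : ∀ s ≥ 0, U' s ≤ -(a * U s ^ α + b * U s ^ β))
    (ht : 1 / (a * (1 - α)) + 1 / (b * (β - 1)) ≤ t) : U t = 0 := by
  have hUα : ∀ s ≥ 0, U' s ≤ -a * U s ^ α := fun s hs ↦ by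
    nlinarith [hU' s hs, mul_nonneg hb.le (Real.rpow_nonneg (hU₀ s hs) β)]
  have hUβ : ∀ s ≥ 0, U' s ≤ -b * U s ^ β := fun s hs ↦ by
    nlinarith [hU' s hs, mul_nonneg ha.le (Real.rpow_nonneg (hU₀ s hs) α)]
  have hanti : AntitoneOn U (Ici 0) :=
    antitoneOn_of_hasDerivWithinAt_nonpos (convex_Ici 0)
      (fun s hs ↦ (hU s hs).continuousAt.continuousWithinAt)
      (fun s hs ↦ (hU s (interior_subset hs)).hasDerivWithinAt) fun s hs ↦ by
        nlinarith [hUα s (interior_subset hs), Real.rpow_nonneg (hU₀ s (interior_subset hs)) α]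
  set t₁ := 1 / (b * (β - 1))
  have ha' : 0 < a * (1 - α) := mul_pos ha (sub_pos.mpr hα)
  have hb' : 0 < b * (β - 1) := mul_pos hb (sub_pos.mpr hβ)
  have ht₁ : 0 < t₁ := one_div_pos.mpr hb'
  have ht₁t : t₁ ≤ t := by linarith [one_div_pos.mpr ha']
  have ht₀ : 0 ≤ t := ht₁.le.trans ht₁t
  rcases (hU₀ t ht₀).eq_or_lt with hUt | hUt
  · exact hUt.symm
  have hpos : ∀ s ∈ Icc 0 t, 0 < U s := fun s hs ↦ hUt.trans_le (hanti hs.1 ht₀ hs.2)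
  have hUt₁ : U t₁ < 1 := by
    have hgrow := rpow_one_sub_add_mul_le_of_deriv_le_neg_rpow_of_one_lt hβ ht₁.le
      (fun s hs ↦ hpos s ⟨hs.1, hs.2.trans ht₁t⟩) (fun s hs ↦ hU s hs.1) fun s hs ↦ hUβ s hs.1
    rw [sub_zero, mul_one_div_cancel hb'.ne'] at hgrow
    by_contra! hge
    linarith [Real.rpow_le_one_of_one_le_of_nonpos hge (by linarith : 1 - β ≤ 0),
      Real.rpow_pos_of_pos (hpos 0 ⟨le_rfl, ht₀⟩) (1 - β)]
  have hdecay := rpow_one_sub_le_of_deriv_le_neg_rpow_of_lt_one hα ht₁t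
    (fun s hs ↦ hpos s ⟨ht₁.le.trans hs.1, hs.2⟩) (fun s hs ↦ hU s (ht₁.le.trans hs.1))
    fun s hs ↦ hUα s (ht₁.le.trans hs.1)
  have hlong : 1 ≤ a * (1 - α) * (t - t₁) := by
    calc 1 = a * (1 - α) * (1 / (a * (1 - α))) := (mul_one_div_cancel ha'.ne').symm
      _ ≤ a * (1 - α) * (t - t₁) := by gcongr; linarith
  linarith [Real.rpow_le_one (hpos t₁ ⟨ht₁.le, ht₁t⟩).le hUt₁.le (by linarith : 0 ≤ 1 - α),
    Real.rpow_pos_of_pos hUt (1 - α)]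

theorem hasDerivAt_inner_apply_self {E : Type*} [NormedAddCommGroup E] [InnerProductSpace ℝ E]
    [FiniteDimensional ℝ E] {T : E →ₗ[ℝ] E} (hT : T.IsSymmetric) {x : ℝ → E} {v : E} {t : ℝ}
    (hx : HasDerivAt x v t) :
    HasDerivAt (fun s ↦ ⟪x s, T (x s)⟫) (2 * ⟪T (x t), v⟫) t := by
  have hTx : HasDerivAt (fun s ↦ T (x s)) (T v) t :=
    (LinearMap.toContinuousLinearMap T).hasFDerivAt.comp_hasDerivAt t hx
  refine (hx.inner ℝ hTx).congr_deriv ?_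
  rw [← hT, real_inner_comm v]; ring

theorem SimpleGraph.inner_toEuclideanLin_lapMatrix_self_eq_zero_iff {V : Type*} [Fintype V]
    [DecidableEq V] (G : SimpleGraph V) [DecidableRel G.Adj] (z : EuclideanSpace ℝ V) :
    ⟪z, (G.lapMatrix ℝ).toEuclideanLin z⟫ = 0 ↔ ∀ i j, G.Reachable i j → z i = z j := by
  rw [← G.lapMatrix_toLinearMap₂'_apply'_eq_zero_iff_forall_reachable, Matrix.toLinearMap₂'_apply',
    EuclideanSpace.inner_eq_star_dotProduct]
  simp [dotProduct_comm]

theorem fxt_network_consensus_general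
    (N : ℕ) (G : SimpleGraph (Fin N)) [DecidableRel G.Adj]
    (hG : G.Connected)
    (lam : ℝ) (hlam : 0 < lam)
    (hPL : ∀ z : EuclideanSpace ℝ (Fin N),
      lam * ⟪z, Matrix.toEuclideanLin (G.lapMatrix ℝ) z⟫ ≤
        ‖Matrix.toEuclideanLin (G.lapMatrix ℝ) z‖ ^ 2)
    (σ ρ p q : ℝ) (hσ : 0 < σ) (hρ : 0 < ρ) (hp : p ∈ Set.Ico (0:ℝ) 1) (hq : 1 < q)
    (g : EuclideanSpace ℝ (Fin N) → EuclideanSpace ℝ (Fin N))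
    (hg : ∀ y, σ * ‖y‖ ^ (1 + p) + ρ * ‖y‖ ^ (1 + q) ≤ ⟪g y, y⟫)
    (x : ℝ → EuclideanSpace ℝ (Fin N))
    (hx : ∀ t ≥ (0:ℝ),
      HasDerivAt x (-(g (Matrix.toEuclideanLin (G.lapMatrix ℝ) (x t)))) t) :
    ∀ t : ℝ, 1 / (lam * σ * (1 - p)) + 1 / (lam * ρ * (q - 1)) ≤ t →
      ∀ i j : Fin N, x t i = x t j := by
  intro t ht i j
  set A := Matrix.toEuclideanLin (G.lapMatrix ℝ)
  have hA : A.IsPositive := Matrix.isPositive_toEuclideanLin_iff.mpr (G.posSemidef_lapMatrix ℝ)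
  set U : ℝ → ℝ := fun s ↦ lam * ⟪x s, A (x s)⟫
  have hU₀ (s : ℝ) : 0 ≤ U s := mul_nonneg hlam.le (hA.inner_nonneg_right _)
  have hU (s : ℝ) (hs : s ≥ 0) :
      HasDerivAt U (lam * (2 * ⟪A (x s), -g (A (x s))⟫)) s :=
    (hasDerivAt_inner_apply_self hA.isSymmetric (hx s hs)).const_mul lam
  have hU' (s : ℝ) : lam * (2 * ⟪A (x s), -g (A (x s))⟫) ≤
      -(2 * lam * σ * U s ^ ((1 + p) / 2) + 2 * lam * ρ * U s ^ ((1 + q) / 2)) := by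
    have hUs : U s ≤ ‖A (x s)‖ ^ 2 := hPL (x s)
    have hp' := rpow_div_two_le_pow_of_le_sq (r := 1 + p) (hU₀ s) (norm_nonneg _)
      (by linarith [hp.1]) hUs
    have hq' := rpow_div_two_le_pow_of_le_sq (r := 1 + q) (hU₀ s) (norm_nonneg _)
      (by linarith) hUs
    rw [inner_neg_right, real_inner_comm]
    nlinarith [hg (A (x s)), mul_le_mul_of_nonneg_left hp' hσ.le,
      mul_le_mul_of_nonneg_left hq' hρ.le]
  have hUt : U t = 0 :=
    eq_zero_of_deriv_le_neg_rpow_add_rpow (by positivity) (by positivity)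
      (by linarith [hp.2]) (by linarith) (fun s _ ↦ hU₀ s) hU (fun s _ ↦ hU' s) (by convert ht using 3 <;> ring)
  have hxt : ⟪x t, A (x t)⟫ = 0 := (mul_eq_zero.mp hUt).resolve_left hlam.ne'
  exact (G.inner_toEuclideanLin_lapMatrix_self_eq_zero_iff (x t)).mp hxt i j (hG.preconnected i j)

/-- Corollary 1: fixed-time consensus of the network flow x' = -g(Lx) over a
connected graph, where L is the graph Laplacian. -/
theorem fxt_network_consensus
    (N : ℕ) (hN : 1 ≤ N) (G : SimpleGraph (Fin N)) [DecidableRel G.Adj]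
    (hG : G.Connected)
    (lam : ℝ) (hlam : 0 < lam)
    (hPL : ∀ z : EuclideanSpace ℝ (Fin N),
      lam * ⟪z, Matrix.toEuclideanLin (G.lapMatrix ℝ) z⟫ ≤
        ‖Matrix.toEuclideanLin (G.lapMatrix ℝ) z‖ ^ 2)
    (σ ρ p q : ℝ) (hσ : 0 < σ) (hρ : 0 < ρ) (hp : p ∈ Set.Ico (0:ℝ) 1) (hq : 1 < q)
    (g : EuclideanSpace ℝ (Fin N) → EuclideanSpace ℝ (Fin N))
    (hg : ∀ y, σ * ‖y‖ ^ (1 + p) + ρ * ‖y‖ ^ (1 + q) ≤ ⟪g y, y⟫)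
    (x : ℝ → EuclideanSpace ℝ (Fin N))
    (hx : ∀ t ≥ (0:ℝ),
      HasDerivAt x (-(g (Matrix.toEuclideanLin (G.lapMatrix ℝ) (x t)))) t) :
    ∀ t : ℝ, 1 / (lam * σ * (1 - p)) + 1 / (lam * ρ * (q - 1)) ≤ t →
      ∀ i j : Fin N, x t i = x t j :=
  fxt_network_consensus_general N G hG lam hlam hPL σ ρ p q hσ hρ hp hq g hg x hx
end
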